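/- arXiv:1409.6943 — 4 statements merged into one kernel-verified Lean document; each statement's English description precedes it below -/
import Mathlib

section
/- Let C be a pretriangulated category with a t-structure (homologically indexed), let S be a set, and assume C has S-indexed products. Fix an integer r. Then the following are equivalent: (i) the functor X ↦ τ_{<r}X, regarded as an endofunctor of C, preserves S-indexed products; (ii) the functor X ↦ τ_{≥r}X, regarded as an endofunctor of C, preserves S-indexed products; (iii) for every S-indexed family of objects of C_{≥r}, its product in C belongs to C_{≥r}; (iv) the inclusion C_{≥r} ↪ C preserves S-indexed products. (This is the paper's Proposition 'limit-in-localization', in the t-structure instance with the class of diagrams taken to be S-indexed products; the proof uses that products of distinguished triangles are distinguished.) -/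
/-!
`C_{≥ r}` is coreflective with coreflector `τ_{≥ r}`, so `τ_{≥ r}` preserves every product that
the inclusion `C_{≥ r} ↪ C` preserves, and the inclusion preserves `S`-indexed products exactly
when `C_{≥ r}` is closed under them.

If `τ_{≥ r}` preserves the product `∏ X_i`, the product of the truncation triangles of the `X_i`
is a distinguished triangle `∏ τ_{≥ r} X_i → ∏ X_i → ∏ τ_{< r} X_i → ⋯` with first vertex
`≅ τ_{≥ r}(∏ X_i)` and third vertex in `C_{< r}` (which, as the right orthogonal of `C_{≥ r}`, is
closed under products). So it is isomorphic to the truncation triangle of `∏ X_i`, and on third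
vertices the isomorphism is the comparison map of `τ_{< r}`.

Finally, if `τ_{< r}` preserves products, it kills every product of objects of `C_{≥ r}`, and an
object killed by `τ_{< r}` lies in `C_{≥ r}`.
-/

open CategoryTheory Category Limits Pretriangulated

universe v u

/-- A homologically indexed t-structure on a pretriangulated category, together with
its truncation functors `truncGE n` (coreflections onto `C_{≥ n}`) and
`truncLT n` (reflections onto `C_{< n} = C_{≤ n - 1}`). -/
structure HomologicalTStructure (C : Type u) [Category.{v} C] [Preadditive C]
    [HasZeroObject C] [HasShift C ℤ] [∀ (n : ℤ), (shiftFunctor C n).Additive]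
    [Pretriangulated C] where
  /-- the subcategory `C_{≥ n}` -/
  GE (n : ℤ) : C → Prop
  /-- the subcategory `C_{≤ n}` (so that `C_{< n} = C_{≤ n - 1}`) -/
  LE (n : ℤ) : C → Prop
  ge_iso (n : ℤ) {X Y : C} (e : X ≅ Y) : GE n X → GE n Y
  le_iso (n : ℤ) {X Y : C} (e : X ≅ Y) : LE n X → LE n Y
  ge_antitone {n m : ℤ} (h : n ≤ m) (X : C) : GE m X → GE n X
  le_monotone {n m : ℤ} (h : n ≤ m) (X : C) : LE n X → LE m X
  ge_shift (n : ℤ) (X : C) : GE n X ↔ GE (n + 1) (X⟦(1 : ℤ)⟧)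
  le_shift (n : ℤ) (X : C) : LE n X ↔ LE (n + 1) (X⟦(1 : ℤ)⟧)
  hom_zero (n : ℤ) {X Y : C} (f : X ⟶ Y) : GE n X → LE (n - 1) Y → f = 0
  /-- the truncation functor `τ_{≥ n}`, regarded as an endofunctor of `C` -/
  truncGE (n : ℤ) : C ⥤ C
  /-- the truncation functor `τ_{< n} = τ_{≤ n - 1}`, regarded as an endofunctor of `C` -/
  truncLT (n : ℤ) : C ⥤ C
  /-- the counit `τ_{≥ n} X ⟶ X` -/
  counit (n : ℤ) : truncGE n ⟶ 𝟭 C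
  /-- the unit `X ⟶ τ_{< n} X` -/
  unit (n : ℤ) : 𝟭 C ⟶ truncLT n
  /-- the connecting morphism `τ_{< n} X ⟶ (τ_{≥ n} X)⟦1⟧` -/
  connecting (n : ℤ) : truncLT n ⟶ truncGE n ⋙ shiftFunctor C (1 : ℤ)
  truncGE_mem (n : ℤ) (X : C) : GE n ((truncGE n).obj X)
  truncLT_mem (n : ℤ) (X : C) : LE (n - 1) ((truncLT n).obj X)
  triangle_dist (n : ℤ) (X : C) :
    Triangle.mk ((counit n).app X) ((unit n).app X) ((connecting n).app X) ∈ distTriang C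

namespace CategoryTheory

lemma ObjectProperty.isClosedUnderLimitsOfShape_discrete {C : Type*} [Category C]
    {P : ObjectProperty C} [P.IsClosedUnderIsomorphisms] {S : Type*}
    [HasLimitsOfShape (Discrete S) C] (hP : ∀ f : S → C, (∀ i, P (f i)) → P (∏ᶜ f)) :
    P.IsClosedUnderLimitsOfShape (Discrete S) :=
  ⟨fun _ ⟨p⟩ => P.prop_of_iso
    (p.isLimit.conePointsIsoOfNatIso (limit.isLimit _) Discrete.natIsoFunctor).symm
    (hP _ fun s => p.prop_diag_obj ⟨s⟩)⟩

lemma Limits.isZero_pi {C : Type*} [Category C] [HasZeroMorphisms C] {ι : Type*} {f : ι → C}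
    [HasProduct f] (hf : ∀ i, IsZero (f i)) : IsZero (∏ᶜ f) :=
  (IsZero.iff_id_eq_zero _).2 (Pi.hom_ext _ _ fun i => (hf i).eq_of_tgt _ _)

end CategoryTheory

namespace HomologicalTStructure

variable {C : Type u} [Category.{v} C] [Preadditive C] [HasZeroObject C] [HasShift C ℤ]
  [∀ (n : ℤ), (shiftFunctor C n).Additive] [Pretriangulated C] (t : HomologicalTStructure C)
  {n : ℤ}

lemma le_shift_neg_one {X : C} (hX : t.LE n X) : t.LE n (X⟦(-1 : ℤ)⟧) := by
  have h : t.LE (n - 1 + 1) ((X⟦(-1 : ℤ)⟧)⟦(1 : ℤ)⟧) :=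
    t.le_iso _ ((shiftFunctorCompIsoId C (-1 : ℤ) 1 (by omega)).app X).symm (by simpa using hX)
  exact t.le_monotone (by omega) _ ((t.le_shift _ _).2 h)

lemma ge_shift_one {X : C} (hX : t.GE n X) : t.GE n (X⟦(1 : ℤ)⟧) :=
  t.ge_antitone (by omega) _ ((t.ge_shift n X).1 hX)

lemma comp_mor₁_bijective {T : Triangle C} (hT : T ∈ distTriang C)
    (h₃ : t.LE (n - 1) T.obj₃) {Z : C} (hZ : t.GE n Z) :
    Function.Bijective (fun φ : Z ⟶ T.obj₁ => φ ≫ T.mor₁) := by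
  refine ⟨fun φ φ' h => ?_, fun g => ?_⟩
  · have h₀ : (φ - φ') ≫ T.mor₁ = 0 := by rw [Preadditive.sub_comp, sub_eq_zero]; exact h
    obtain ⟨g, hg⟩ := Triangle.coyoneda_exact₂ _ (inv_rot_of_distTriang _ hT) _ h₀
    rw [t.hom_zero n g hZ (t.le_shift_neg_one h₃), zero_comp] at hg
    exact sub_eq_zero.1 hg
  · obtain ⟨φ, hφ⟩ := Triangle.coyoneda_exact₂ _ hT g (t.hom_zero n _ hZ h₃)
    exact ⟨φ, hφ.symm⟩

lemma mor₂_comp_injective {T : Triangle C} (hT : T ∈ distTriang C) (h₁ : t.GE n T.obj₁)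
    {W : C} (hW : t.LE (n - 1) W) :
    Function.Injective (fun ψ : T.obj₃ ⟶ W => T.mor₂ ≫ ψ) := by
  intro ψ ψ' h
  obtain ⟨g, hg⟩ := Triangle.yoneda_exact₃ _ hT (ψ - ψ')
    (by rw [Preadditive.comp_sub, sub_eq_zero]; exact h)
  rw [t.hom_zero n g (t.ge_shift_one h₁) hW, comp_zero] at hg
  exact sub_eq_zero.1 hg

lemma comp_counit_bijective (X : C) {Z : C} (hZ : t.GE n Z) :
    Function.Bijective (fun φ : Z ⟶ (t.truncGE n).obj X => φ ≫ (t.counit n).app X) :=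
  t.comp_mor₁_bijective (t.triangle_dist n X) (t.truncLT_mem n X) hZ

lemma unit_comp_injective (X : C) {W : C} (hW : t.LE (n - 1) W) :
    Function.Injective (fun ψ : (t.truncLT n).obj X ⟶ W => (t.unit n).app X ≫ ψ) :=
  t.mor₂_comp_injective (t.triangle_dist n X) (t.truncGE_mem n X) hW

lemma isZero_truncLT_obj_of_ge {X : C} (hX : t.GE n X) : IsZero ((t.truncLT n).obj X) := by
  rw [IsZero.iff_id_eq_zero]
  apply t.unit_comp_injective X (t.truncLT_mem n X)
  simpa only [comp_id, comp_zero] using t.hom_zero n _ hX (t.truncLT_mem n X)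

lemma ge_of_isZero_truncLT_obj {X : C} (hX : IsZero ((t.truncLT n).obj X)) : t.GE n X := by
  have : IsIso ((t.counit n).app X) :=
    (Triangle.isZero₃_iff_isIso₁ _ (t.triangle_dist n X)).1 hX
  exact t.ge_iso n (asIso ((t.counit n).app X)) (t.truncGE_mem n X)

lemma le_of_forall_hom_eq_zero {X : C} (hX : ∀ Z, t.GE n Z → ∀ f : Z ⟶ X, f = 0) :
    t.LE (n - 1) X := by
  have hZ : IsZero ((t.truncGE n).obj X) := by
    rw [IsZero.iff_id_eq_zero]
    apply (t.comp_counit_bijective X (t.truncGE_mem n X)).1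
    simpa only [id_comp, zero_comp] using hX _ (t.truncGE_mem n X) _
  have : IsIso ((t.unit n).app X) := (Triangle.isZero₁_iff_isIso₂ _ (t.triangle_dist n X)).1 hZ
  exact t.le_iso _ (asIso ((t.unit n).app X)).symm (t.truncLT_mem n X)

lemma le_pi {ι : Type*} (Y : ι → C) [HasProduct Y] (hY : ∀ i, t.LE (n - 1) (Y i)) :
    t.LE (n - 1) (∏ᶜ Y) :=
  t.le_of_forall_hom_eq_zero fun _ hZ _ =>
    Pi.hom_ext _ _ fun i => by rw [zero_comp]; exact t.hom_zero n _ hZ (hY i)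

instance : ObjectProperty.IsClosedUnderIsomorphisms (t.GE n) := ⟨fun e => t.ge_iso n e⟩

variable (n) in
abbrev toGE : C ⥤ ObjectProperty.FullSubcategory (t.GE n) :=
  ObjectProperty.lift _ (t.truncGE n) (t.truncGE_mem n)

noncomputable def truncGEHomEquiv {Z : C} (hZ : t.GE n Z) (X : C) :
    (Z ⟶ (t.truncGE n).obj X) ≃ (Z ⟶ X) :=
  Equiv.ofBijective _ (t.comp_counit_bijective X hZ)

@[simp]
lemma truncGEHomEquiv_apply {Z : C} (hZ : t.GE n Z) {X : C} (φ : Z ⟶ (t.truncGE n).obj X) :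
    t.truncGEHomEquiv hZ X φ = φ ≫ (t.counit n).app X :=
  rfl

variable (n) in
noncomputable def adjunctionGE : ObjectProperty.ι (t.GE n) ⊣ t.toGE n :=
  Adjunction.mkOfHomEquiv
    { homEquiv := fun Z X =>
        ((ObjectProperty.fullyFaithfulι (t.GE n)).homEquiv (X := Z) (Y := (t.toGE n).obj X)).trans
          (t.truncGEHomEquiv Z.property X) |>.symm
      homEquiv_naturality_left_symm := fun f g => by simp [Functor.FullyFaithful.homEquiv]
      homEquiv_naturality_right := fun {Z _ _} f g => by
        rw [Equiv.symm_apply_eq]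
        dsimp [Functor.FullyFaithful.homEquiv]
        rw [assoc, (t.counit n).naturality g, ← assoc, ← truncGEHomEquiv_apply _ Z.property,
          Equiv.apply_symm_apply, Functor.id_map] }

lemma preservesLimitsOfShape_truncGE {J : Type*} [Category J]
    [PreservesLimitsOfShape J (ObjectProperty.ι (t.GE n))] :
    PreservesLimitsOfShape J (t.truncGE n) :=
  have := (t.adjunctionGE n).rightAdjoint_preservesLimits
  comp_preservesLimitsOfShape (t.toGE n) (ObjectProperty.ι (t.GE n))

variable (n) in
abbrev truncTriangle (X : C) : Triangle C :=
  Triangle.mk ((t.counit n).app X) ((t.unit n).app X) ((t.connecting n).app X)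

lemma isIso_piComparison_truncLT {ι : Type*} [HasLimitsOfShape (Discrete ι) C] (f : ι → C)
    [IsIso (piComparison (t.truncGE n) f)] : IsIso (piComparison (t.truncLT n) f) := by
  have hT := productTriangle_distinguished (t.truncTriangle n ∘ f)
    fun i => t.triangle_dist n (f i)
  have hsq : piComparison (t.truncGE n) f ≫ Limits.Pi.map (fun i => (t.counit n).app (f i)) =
      (t.counit n).app (∏ᶜ f) :=
    Pi.hom_ext _ _ fun i => by simp
  let e₁ : (t.truncGE n).obj (∏ᶜ f) ≅ ∏ᶜ fun i => (t.truncGE n).obj (f i) :=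
    asIso (piComparison (t.truncGE n) f)
  obtain ⟨e, -, he₂ : e.hom.hom₂ = 𝟙 _⟩ :=
    exists_iso_of_arrow_iso _ _ (t.triangle_dist n (∏ᶜ f)) hT
      (Arrow.isoMk e₁ (Iso.refl _) (hsq.trans (comp_id _).symm))
  have he₃ : e.hom.hom₃ = piComparison (t.truncLT n) f := by
    have h₃ : (t.unit n).app (∏ᶜ f) ≫ e.hom.hom₃ =
        Limits.Pi.map fun i => (t.unit n).app (f i) :=
      e.hom.comm₂.trans (by rw [he₂]; exact id_comp _)
    have h : (t.unit n).app (∏ᶜ f) ≫ piComparison (t.truncLT n) f =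
        Limits.Pi.map fun i => (t.unit n).app (f i) := by
      ext i
      simpa using ((t.unit n).naturality (Pi.π f i)).symm
    exact t.unit_comp_injective (∏ᶜ f) (t.le_pi _ fun i => t.truncLT_mem n (f i))
      (h₃.trans h.symm)
  rw [← he₃]
  exact (Triangle.π₃.mapIso e).isIso_hom

lemma preservesLimitsOfShape_truncLT {ι : Type*} [HasLimitsOfShape (Discrete ι) C]
    [PreservesLimitsOfShape (Discrete ι) (t.truncGE n)] :
    PreservesLimitsOfShape (Discrete ι) (t.truncLT n) :=
  have (f : ι → C) : PreservesLimit (Discrete.functor f) (t.truncLT n) :=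
    have := t.isIso_piComparison_truncLT (n := n) f
    PreservesProduct.of_iso_comparison _ f
  preservesLimitsOfShape_of_discrete _

lemma ge_pi_of_preservesLimitsOfShape_truncLT {ι : Type*} [HasLimitsOfShape (Discrete ι) C]
    [PreservesLimitsOfShape (Discrete ι) (t.truncLT n)] (f : ι → C) (hf : ∀ i, t.GE n (f i)) :
    t.GE n (∏ᶜ f) :=
  t.ge_of_isZero_truncLT_obj <| (isZero_pi fun i => t.isZero_truncLT_obj_of_ge (hf i)).of_iso
    (PreservesProduct.iso (t.truncLT n) f)

end HomologicalTStructure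

/-- for a fixed `r` and a set `S` such that `C` has `S`-indexed products,
the following are equivalent: (i) `τ_{< r}` preserves `S`-indexed products;
(ii) `τ_{≥ r}` preserves `S`-indexed products; (iii) `C_{≥ r}` is closed under `S`-indexed
products in `C`; (iv) the inclusion `C_{≥ r} ↪ C` preserves `S`-indexed products. -/
theorem limit_in_localization_products {C : Type u} [Category.{v} C] [Preadditive C]
    [HasZeroObject C] [HasShift C ℤ] [∀ (n : ℤ), (shiftFunctor C n).Additive]
    [Pretriangulated C] (t : HomologicalTStructure C)
    (S : Type w) [HasLimitsOfShape (Discrete S) C] (r : ℤ) :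
    [Nonempty (PreservesLimitsOfShape (Discrete S) (t.truncLT r)),
     Nonempty (PreservesLimitsOfShape (Discrete S) (t.truncGE r)),
     ∀ f : S → C, (∀ i, t.GE r (f i)) → t.GE r (∏ᶜ f),
     Nonempty (PreservesLimitsOfShape (Discrete S)
       (ObjectProperty.ι (t.GE r)))].TFAE := by
  tfae_have 3 → 4 := fun h =>
    have := ObjectProperty.isClosedUnderLimitsOfShape_discrete (P := t.GE r) h
    ⟨inferInstance⟩
  tfae_have 4 → 2 := fun ⟨_⟩ => ⟨t.preservesLimitsOfShape_truncGE⟩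
  tfae_have 2 → 1 := fun ⟨_⟩ => ⟨t.preservesLimitsOfShape_truncLT⟩
  tfae_have 1 → 3 := fun ⟨_⟩ => t.ge_pi_of_preservesLimitsOfShape_truncLT
  tfae_finish
end

section
/- Let C be a monoidal category with all small colimits whose tensor product preserves small colimits in each variable, and let 𝒜 be the category of filtered objects of C with the Day-convolution tensor product (X ⊗ Y)_n = colim_{i+j ≥ n} X_i ⊗ Y_j. If r, s are integers, X ∈ 𝒜_{≥r} and Y ∈ 𝒜_{≥s}, then X ⊗ Y ∈ 𝒜_{≥r+s}; that is, for every n ≤ r+s the structure map (X ⊗ Y)_{r+s} → (X ⊗ Y)_n is an isomorphism. (This is the paper's Proposition 'filtered-objects-monoidal': the symmetric monoidal structure on filtered objects is compatible with the filtration; the proof identifies the colimit over {i+j ≥ n} as a left Kan extension of its restriction to {i ≥ r, j ≥ s}.) -/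
open CategoryTheory Category Limits MonoidalCategory Opposite

universe v u

/-- A filtered object of `C` is a diagram `⋯ ⟵ X_n ⟵ X_{n+1} ⟵ ⋯`, i.e. a functor
`ℤᵒᵖ ⥤ C`. -/
abbrev FilteredObj (C : Type u) [Category.{v} C] := ℤᵒᵖ ⥤ C

/-- A filtered object `X` lies in `𝒜_{≥ r}` if all the structure maps `X_r ⟶ X_n`,
`n ≤ r`, are isomorphisms. -/
def IsGeFil {C : Type u} [Category.{v} C] (r : ℤ) (X : FilteredObj C) : Prop :=
  ∀ (n : ℤ) (h : n ≤ r), IsIso (X.map (homOfLE h).op)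

variable {C : Type u} [Category.{v} C] [MonoidalCategory C] [HasColimits C]

/-- The indexing poset `{(i, j) : ℤ × ℤ | i + j ≥ n}` for the Day convolution. -/
abbrev ConvIndex (n : ℤ) : Type := {p : ℤ × ℤ // n ≤ p.1 + p.2}

/-- The diagram `(i, j) ↦ X_i ⊗ Y_j` on `{(i, j) | i + j ≥ n}`, contravariant since the
structure maps go from larger `(i, j)` to smaller ones. -/
@[simps] noncomputable def convDiag (X Y : FilteredObj C) (n : ℤ) : (ConvIndex n)ᵒᵖ ⥤ C where
  obj p := X.obj (op p.unop.1.1) ⊗ Y.obj (op p.unop.1.2)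
  map {p q} f :=
    X.map (homOfLE (show q.unop.1.1 ≤ p.unop.1.1 from (leOfHom f.unop).1)).op ⊗ₘ
      Y.map (homOfLE (show q.unop.1.2 ≤ p.unop.1.2 from (leOfHom f.unop).2)).op
  map_id p := by
    simp only [homOfLE_refl, op_id, CategoryTheory.Functor.map_id, id_tensorHom_id]
  map_comp {p q w} f g := by
    rw [tensorHom_comp_tensorHom, ← X.map_comp, ← Y.map_comp, ← op_comp, ← op_comp,
      homOfLE_comp, homOfLE_comp]

/-- The Day convolution of two filtered objects, in level `n`:
`(X ⊗ Y)_n = colim_{i+j ≥ n} X_i ⊗ Y_j`. -/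
noncomputable def conv (X Y : FilteredObj C) (n : ℤ) : C :=
  colimit (convDiag X Y n)

/-- The structure map `(X ⊗ Y)_m ⟶ (X ⊗ Y)_n` for `n ≤ m`, induced by the inclusion
`{i + j ≥ m} ⊆ {i + j ≥ n}` of indexing posets. -/
noncomputable def convMap (X Y : FilteredObj C) {n m : ℤ} (h : n ≤ m) :
    conv X Y m ⟶ conv X Y n :=
  colimit.desc (convDiag X Y m)
    { pt := conv X Y n
      ι :=
        { app := fun p => colimit.ι (convDiag X Y n) (op ⟨p.unop.1, h.trans p.unop.2⟩)
          naturality := by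
            intro p q f
            simp only [Functor.const_obj_map]
            exact (colimit.w (convDiag X Y n)
              ((homOfLE (show (⟨q.unop.1, h.trans q.unop.2⟩ : ConvIndex n) ≤
                ⟨p.unop.1, h.trans p.unop.2⟩ from leOfHom f.unop)).op)).trans
              (Category.comp_id _).symm } }

/-!
For `n ≤ r + s`, sending `(i, j)` with `i + j ≥ n` to `(max i r, max j s)` lands in
`{i + j ≥ r + s}`, and the corresponding map `X_{max i r} ⊗ Y_{max j s} ⟶ X_i ⊗ Y_j` is an
isomorphism because `X ∈ 𝒜_{≥ r}` and `Y ∈ 𝒜_{≥ s}`. So the diagram on `{i + j ≥ n}` is, up to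
isomorphism, pulled back from its restriction to `{i + j ≥ r + s}`, and the two colimits agree.
-/

theorem isIso_colimit_pre_of_natTrans {C J K : Type*} [Category C] [Category J] [Category K]
    (F : J ⥤ K) (G : K ⥤ J) (D : K ⥤ C) [HasColimit D] [HasColimit (F ⋙ D)]
    (α : G ⋙ F ⟶ 𝟭 K) (β : F ⋙ G ⟶ 𝟭 J) (hαβ : ∀ j, α.app (F.obj j) = F.map (β.app j))
    (hα : ∀ k, IsIso (D.map (α.app k))) : IsIso (colimit.pre D F) := by
  let inv' : colimit D ⟶ colimit (F ⋙ D) := colimit.desc D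
    { pt := colimit (F ⋙ D)
      ι :=
        { app := fun k => inv (D.map (α.app k)) ≫ colimit.ι (F ⋙ D) (G.obj k)
          naturality := fun k k' f => by
            have hnat : D.map f ≫ inv (D.map (α.app k')) =
                inv (D.map (α.app k)) ≫ D.map (F.map (G.map f)) := by
              rw [IsIso.comp_inv_eq, assoc, ← D.map_comp, ← Functor.comp_map, α.naturality,
                Functor.id_map, D.map_comp, IsIso.inv_hom_id_assoc]
            simp only [Functor.const_obj_obj, Functor.const_obj_map, Category.comp_id,
              reassoc_of% hnat, IsIso.eq_inv_comp, IsIso.hom_inv_id_assoc]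
            exact colimit.w (F ⋙ D) (G.map f) } }
  refine ⟨inv', colimit.hom_ext fun j => ?_, colimit.hom_ext fun k => ?_⟩
  · simp only [inv', colimit.ι_pre_assoc, colimit.ι_desc, Category.comp_id, IsIso.inv_comp_eq,
      hαβ]
    exact (colimit.w (F ⋙ D) (β.app j)).symm
  · simp only [inv', colimit.ι_desc_assoc, assoc, colimit.ι_pre, Category.comp_id,
      IsIso.inv_comp_eq]
    exact (colimit.w D (α.app k)).symm

namespace IsGeFil

variable {C : Type u} [Category.{v} C] {r : ℤ} {X : FilteredObj C}

lemma isIso_map_of_le (hX : IsGeFil r X) {a b : ℤ} (hab : a ≤ b) (hbr : b ≤ r) :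
    IsIso (X.map (homOfLE hab).op) := by
  have := hX b hbr
  have : IsIso (X.map (homOfLE hbr).op ≫ X.map (homOfLE hab).op) := by
    rw [← X.map_comp, ← op_comp, homOfLE_comp]
    exact hX a (hab.trans hbr)
  exact IsIso.of_isIso_comp_left (X.map (homOfLE hbr).op) _

lemma isIso_map_le_max (hX : IsGeFil r X) (a : ℤ) :
    IsIso (X.map (homOfLE (le_max_left a r)).op) := by
  rcases le_total a r with h | h
  · exact hX.isIso_map_of_le _ (max_le h le_rfl)
  · rw [Subsingleton.elim (homOfLE (le_max_left a r)).op (eqToHom (by rw [max_eq_left h]))]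
    infer_instance

end IsGeFil

namespace ConvIndex

noncomputable def incl {n m : ℤ} (h : n ≤ m) : ConvIndex m ⥤ ConvIndex n :=
  Monotone.functor (f := fun p => ⟨p.1, h.trans p.2⟩) fun _ _ hpq => hpq

noncomputable def raise (r s : ℤ) {n : ℤ} : ConvIndex n ⥤ ConvIndex (r + s) :=
  Monotone.functor
    (f := fun p =>
      ⟨(max p.1.1 r, max p.1.2 s), add_le_add (le_max_right _ _) (le_max_right _ _)⟩)
    fun _ _ hpq => ⟨max_le_max hpq.1 le_rfl, max_le_max hpq.2 le_rfl⟩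

end ConvIndex

lemma convMap_eq_colimit_pre {C : Type u} [Category.{v} C] [MonoidalCategory C] [HasColimits C]
    (X Y : FilteredObj C) {n m : ℤ} (h : n ≤ m) :
    convMap X Y h = colimit.pre (convDiag X Y n) (ConvIndex.incl h).op :=
  colimit.hom_ext fun p =>
    (colimit.ι_desc _ _).trans (colimit.ι_pre (convDiag X Y n) (ConvIndex.incl h).op p).symm

/-- if `X ∈ 𝒜_{≥ r}` and `Y ∈ 𝒜_{≥ s}`, then `X ⊗ Y ∈ 𝒜_{≥ r+s}`: for every
`n ≤ r + s` the structure map `(X ⊗ Y)_{r+s} ⟶ (X ⊗ Y)_n` is an isomorphism. -/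
theorem conv_isGeFil {C : Type u} [Category.{v} C] [MonoidalCategory C] [HasColimits C]
    [∀ Z : C, PreservesColimits (tensorLeft Z)]
    [∀ Z : C, PreservesColimits (tensorRight Z)]
    (r s : ℤ) (X Y : FilteredObj C) (hX : IsGeFil r X) (hY : IsGeFil s Y) :
    ∀ (n : ℤ) (h : n ≤ r + s), IsIso (convMap X Y h) := by
  intro n h
  rw [convMap_eq_colimit_pre]
  have up : ∀ {m : ℤ} (p : ConvIndex m), p.1.1 ≤ max p.1.1 r ∧ p.1.2 ≤ max p.1.2 s :=
    fun p => ⟨le_max_left _ _, le_max_left _ _⟩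
  exact isIso_colimit_pre_of_natTrans (ConvIndex.incl h).op (ConvIndex.raise r s).op _
    { app := fun p => (homOfLE (up p.unop)).op } { app := fun p => (homOfLE (up p.unop)).op }
    (fun _ => rfl) fun _ =>
      @tensor_isIso C _ _ _ _ _ _ _ (hX.isIso_map_le_max _) _ (hY.isIso_map_le_max _)
end

section
/- Let C be a monoidal category with all small colimits whose tensor product preserves small colimits in each variable, and let 𝒜 be the category of filtered objects of C with the Day-convolution tensor product (X ⊗ Y)_n = colim_{i+j ≥ n} X_i ⊗ Y_j. If X ∈ 𝒜_{≥∞} (every structure map X_{n+1} → X_n is an isomorphism), then for every filtered object Y, X ⊗ Y ∈ 𝒜_{≥∞}: every structure map (X ⊗ Y)_{n+1} → (X ⊗ Y)_n is an isomorphism. (This is the paper's Proposition 'complete-objects-monoidal', which shows the monoidal structure on filtered objects is completable.) -/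
open CategoryTheory Category Limits MonoidalCategory Opposite

universe v u

variable {C : Type u} [Category.{v} C] [MonoidalCategory C] [HasColimits C]

/-
The shift `(i, j) ↦ (i + 1, j)` identifies `{i + j ≥ n}` with `{i + j ≥ n + 1}`; since every
`X_{i+1} ⟶ X_i` is invertible, precomposing the colimit injections of level `n + 1` with
`X_i ⊗ Y_j ≅ X_{i+1} ⊗ Y_j` gives a map `(X ⊗ Y)_n ⟶ (X ⊗ Y)_{n+1}`. It inverts the structure
map because, in either level, the colimit injection at `(i + 1, j)` factors through the one at
`(i, j)` via `X_{i+1} ⊗ Y_j ⟶ X_i ⊗ Y_j`.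
-/

lemma FilteredObj.map_comp_inv_map_succ {C : Type u} [Category.{v} C] (X : FilteredObj C)
    {i k : ℤ} (h : k ≤ i) [IsIso (X.map (homOfLE (lt_add_one k).le).op)]
    [IsIso (X.map (homOfLE (lt_add_one i).le).op)] :
    X.map (homOfLE h).op ≫ inv (X.map (homOfLE (lt_add_one k).le).op) =
      inv (X.map (homOfLE (lt_add_one i).le).op) ≫
        X.map (homOfLE (add_le_add_left h 1)).op := by
  rw [IsIso.comp_inv_eq, Category.assoc, IsIso.eq_inv_comp, ← X.map_comp, ← X.map_comp,
    ← op_comp, ← op_comp, homOfLE_comp, homOfLE_comp]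

abbrev ConvIndex.succFst {n : ℤ} (p : ConvIndex n) : ConvIndex (n + 1) :=
  ⟨(p.1.1 + 1, p.1.2), by have := p.2; dsimp only at this ⊢; omega⟩

section Conv

variable (X Y : FilteredObj C)

noncomputable def convι {n : ℤ} (p : ConvIndex n) :
    X.obj (op p.1.1) ⊗ Y.obj (op p.1.2) ⟶ conv X Y n :=
  colimit.ι (convDiag X Y n) (op p)

variable {X Y}

lemma conv_hom_ext {n : ℤ} {Z : C} {f g : conv X Y n ⟶ Z}
    (h : ∀ p, convι X Y p ≫ f = convι X Y p ≫ g) : f = g :=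
  colimit.hom_ext fun p => h p.unop

variable (X Y)

lemma convι_convMap {n m : ℤ} (h : n ≤ m) (p : ConvIndex m) :
    convι X Y p ≫ convMap X Y h = convι X Y (⟨p.1, h.trans p.2⟩ : ConvIndex n) :=
  colimit.ι_desc _ _

lemma map_tensorHom_map_comp_convι {n : ℤ} {p q : ConvIndex n} (hi : p.1.1 ≤ q.1.1)
    (hj : p.1.2 ≤ q.1.2) :
    (X.map (homOfLE hi).op ⊗ₘ Y.map (homOfLE hj).op) ≫ convι X Y p = convι X Y q :=
  colimit.w (convDiag X Y n) (homOfLE (show p ≤ q from Prod.mk_le_mk.mpr ⟨hi, hj⟩)).op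

lemma convι_succ_fst {n : ℤ} (p : ConvIndex n) (h : n ≤ (p.1.1 + 1) + p.1.2) :
    convι X Y (⟨(p.1.1 + 1, p.1.2), h⟩ : ConvIndex n) =
      X.map (homOfLE (lt_add_one p.1.1).le).op ▷ Y.obj (op p.1.2) ≫ convι X Y p := by
  rw [← map_tensorHom_map_comp_convι X Y (q := ⟨(p.1.1 + 1, p.1.2), h⟩) (lt_add_one _).le le_rfl]
  simp

variable (hX : ∀ n : ℤ, IsIso (X.map (homOfLE (lt_add_one n).le).op))

noncomputable def convSuccι {n : ℤ} (p : ConvIndex n) :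
    X.obj (op p.1.1) ⊗ Y.obj (op p.1.2) ⟶ conv X Y (n + 1) :=
  inv (X.map (homOfLE (lt_add_one p.1.1).le).op) ▷ Y.obj (op p.1.2) ≫ convι X Y p.succFst

lemma map_tensorHom_map_comp_convSuccι {n : ℤ} {p q : ConvIndex n} (hi : p.1.1 ≤ q.1.1)
    (hj : p.1.2 ≤ q.1.2) :
    (X.map (homOfLE hi).op ⊗ₘ Y.map (homOfLE hj).op) ≫ convSuccι X Y hX p =
      convSuccι X Y hX q := by
  rw [convSuccι, convSuccι, ← map_tensorHom_map_comp_convι X Y (p := p.succFst)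
    (q := q.succFst) (add_le_add_left hi 1) hj]
  simp only [← Category.assoc, ← tensorHom_id, tensorHom_comp_tensorHom, comp_id, id_comp,
    FilteredObj.map_comp_inv_map_succ]

noncomputable def convInv (n : ℤ) : conv X Y n ⟶ conv X Y (n + 1) :=
  colimit.desc (convDiag X Y n)
    { pt := conv X Y (n + 1)
      ι :=
        { app := fun p => convSuccι X Y hX p.unop
          naturality := fun _ _ f =>
            (map_tensorHom_map_comp_convSuccι X Y hX (leOfHom f.unop).1
              (leOfHom f.unop).2).trans (comp_id _).symm } }

lemma convι_convInv {n : ℤ} (p : ConvIndex n) :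
    convι X Y p ≫ convInv X Y hX n = convSuccι X Y hX p :=
  colimit.ι_desc _ _

end Conv

/-- if `X ∈ 𝒜_{≥ ∞}` (every structure map `X_{n+1} ⟶ X_n` is an
isomorphism) then for every filtered object `Y`, `X ⊗ Y ∈ 𝒜_{≥ ∞}`: every structure map
`(X ⊗ Y)_{n+1} ⟶ (X ⊗ Y)_n` is an isomorphism. -/
theorem conv_complete {C : Type u} [Category.{v} C] [MonoidalCategory C] [HasColimits C]
    [∀ Z : C, PreservesColimits (tensorLeft Z)]
    [∀ Z : C, PreservesColimits (tensorRight Z)]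
    (X : FilteredObj C) (hX : ∀ n : ℤ, IsIso (X.map (homOfLE (lt_add_one n).le).op)) :
    ∀ (Y : FilteredObj C) (n : ℤ), IsIso (convMap X Y (lt_add_one n).le) := by
  intro Y n
  refine ⟨convInv X Y hX n, conv_hom_ext fun p => ?_, conv_hom_ext fun p => ?_⟩
  · rw [← Category.assoc, convι_convMap, convι_convInv, convSuccι, convι_succ_fst X Y p,
      ← comp_whiskerRight_assoc, IsIso.inv_hom_id, id_whiskerRight, id_comp, comp_id]
  · rw [← Category.assoc, convι_convInv, convSuccι, Category.assoc, convι_convMap,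
      convι_succ_fst X Y p, ← comp_whiskerRight_assoc, IsIso.inv_hom_id, id_whiskerRight,
      id_comp, comp_id]
end

section
/- Let C be a category with sequential (ℕᵒᵖ-indexed) limits and let 𝒜 be the category of filtered objects of C. Suppose given an inverse system ⋯ ← X^{(i)} ← X^{(i+1)} ← ⋯ (i ∈ ℕ) in 𝒜 and a sequence of integers (r_i) tending to ∞ such that X^{(i)} ∈ 𝒜_{≥ r_i} for every i. Then the levelwise limit L, with L_n = lim_i X^{(i)}_n, belongs to 𝒜_{≥∞}: every structure map L_{n+1} → L_n is an isomorphism. (This is the paper's Lemma 'vanishing-completion' in the instance of the filtered category of filtered objects, where 𝒜_{≥∞} is exactly the kernel of the completion functor.) -/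
open CategoryTheory Category Limits Opposite

universe v u

/-! Over a cofiltered index category the limit only sees the part of the diagram over any fixed
index `j`, because `Over.forget j` is initial. At level `n`, the structure map
`X⁽ⁱ⁾_{n+1} ⟶ X⁽ⁱ⁾_n` is an isomorphism as soon as `n + 1 ≤ r_i`, which holds for all `i ≥ N`;
so the structure map of the levelwise limit is an isomorphism. -/

theorem IsGeFil.isIso_map {C : Type u} [Category.{v} C] {r : ℤ} {X : FilteredObj C}
    (hX : IsGeFil r X) {m n : ℤ} (hmn : m ≤ n) (hnr : n ≤ r) :
    IsIso (X.map (homOfLE hmn).op) := by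
  have := hX n hnr
  have : IsIso (X.map (homOfLE hnr).op ≫ X.map (homOfLE hmn).op) := by
    rw [← X.map_comp]
    exact hX m (hmn.trans hnr)
  exact IsIso.of_isIso_comp_left (X.map (homOfLE hnr).op) _

theorem isIso_limMap_of_isIso_app_over {J : Type*} [Category J] [IsCofilteredOrEmpty J]
    {C : Type u} [Category.{v} C] {F G : J ⥤ C} [HasLimit F] [HasLimit G] (α : F ⟶ G) (j : J)
    (h : ∀ (i : J) (_ : i ⟶ j), IsIso (α.app i)) : IsIso (limMap α) := by
  have : ∀ i : Over j, IsIso ((Functor.whiskerLeft (Over.forget j) α).app i) :=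
    fun i => h i.left i.hom
  have : IsIso (Functor.whiskerLeft (Over.forget j) α) := NatIso.isIso_of_isIso_app _
  have hpre : limMap α ≫ limit.pre G (Over.forget j) =
      limit.pre F (Over.forget j) ≫ limMap (Functor.whiskerLeft (Over.forget j) α) := by
    ext
    simp only [assoc, limit.pre_π, limMap_π, limit.pre_π_assoc]
    rfl
  have : IsIso (limMap α ≫ limit.pre G (Over.forget j)) := by
    rw [hpre]
    infer_instance
  exact IsIso.of_isIso_comp_right _ (limit.pre G (Over.forget j))

theorem isIso_limit_map_of_isIso_map_over {J K : Type*} [Category J] [IsCofilteredOrEmpty J]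
    [Category K] {C : Type u} [Category.{v} C] [HasLimitsOfShape J C] (D : J ⥤ K ⥤ C)
    {k k' : K} (f : k ⟶ k') (j : J) (h : ∀ (i : J) (_ : i ⟶ j), IsIso ((D.obj i).map f)) :
    IsIso ((limit D).map f) := by
  have := isIso_limMap_of_isIso_app_over (Functor.whiskerLeft D ((evaluation K C).map f)) j h
  have hcomm := limit_map_limitObjIsoLimitCompEvaluation_hom D f
  rw [← Iso.eq_comp_inv] at hcomm
  rw [hcomm]
  infer_instance

/-- let `C` have sequential (ℕᵒᵖ-indexed) limits, and let
`⋯ ⟵ X⁽ⁱ⁾ ⟵ X⁽ⁱ⁺¹⁾ ⟵ ⋯` be an inverse system of filtered objects such that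
`X⁽ⁱ⁾ ∈ 𝒜_{≥ r_i}` for a sequence of integers `r_i → ∞`. Then the (levelwise) limit
belongs to `𝒜_{≥ ∞}`: each of its structure maps `L_{n+1} ⟶ L_n` is an isomorphism. -/
theorem limit_of_inverse_system_is_complete {C : Type u} [Category.{v} C]
    [HasLimitsOfShape ℕᵒᵖ C] (D : ℕᵒᵖ ⥤ FilteredObj C) (r : ℕ → ℤ)
    (hr : Filter.Tendsto r Filter.atTop Filter.atTop)
    (hD : ∀ i : ℕ, IsGeFil (r i) (D.obj (op i))) :
    ∀ n : ℤ, IsIso ((limit D).map (homOfLE (lt_add_one n).le).op) := by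
  intro n
  obtain ⟨N, hN⟩ := Filter.eventually_atTop.mp (hr.eventually_ge_atTop (n + 1))
  refine isIso_limit_map_of_isIso_map_over D _ (op N) fun i g => ?_
  exact (hD i.unop).isIso_map _ (hN i.unop (leOfHom g.unop))
end
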